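/- arXiv:2009.06621 — 3 statements merged into one kernel-verified Lean document; each statement's English description precedes it below -/
import Mathlib

section
/- For any n×n matrix Ω (in particular a block-diagonal cluster matrix or an HAC weight matrix built from the common residual vector), the (2,2) block of the sandwich estimator (X'X)^{-1}X' Ω X(X'X)^{-1} equals (X̃2'X̃2)^{-1}X̃2' Ω X̃2(X̃2'X̃2)^{-1}. -/
/-!
Frisch–Waugh–Lovell: the second block row of `(XᵀX)⁻¹Xᵀ` is `(X̃₂ᵀX̃₂)⁻¹X̃₂ᵀ`. Indeed
`B = (X̃₂ᵀX̃₂)⁻¹X̃₂ᵀ` lies in the row space of `Xᵀ`, since `X̃₂ = X P` with `P = [-(X₁ᵀX₁)⁻¹X₁ᵀX₂; I]`,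
and `B X = [0 I]`, since `X̃₂ᵀX₁ = 0` and `X̃₂ᵀX₂ = X̃₂ᵀX̃₂`; a matrix `D Xᵀ` is determined by its
product with `X` when `XᵀX` is invertible. The `(2,2)` block of a sandwich `A Ω Aᵀ` only sees the
second block row of `A`, whatever `Ω` is.
-/

open Matrix

namespace Matrix

variable {R : Type*} [CommRing R] {n k : Type*} [Fintype n] [Fintype k] [DecidableEq k]

theorem toBlocks₂₂_mul_mul_transpose {m₁ m₂ : Type*} (A : Matrix (m₁ ⊕ m₂) n R)
    (Ω : Matrix n n R) : (A * Ω * Aᵀ).toBlocks₂₂ = A.toRows₂ * Ω * A.toRows₂ᵀ :=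
  rfl

theorem fromCols_zero_one_mul {m₁ m₂ p : Type*} [Fintype m₁] [Fintype m₂] [DecidableEq m₂]
    (A : Matrix (m₁ ⊕ m₂) p R) :
    fromCols (0 : Matrix m₂ m₁ R) (1 : Matrix m₂ m₂ R) * A = A.toRows₂ := by
  rw [← fromRows_toRows A, fromCols_mul_fromRows, Matrix.zero_mul, Matrix.one_mul, zero_add,
    toRows₂_fromRows]

theorem transpose_inv_mul_transpose (X : Matrix n k R) :
    ((Xᵀ * X)⁻¹ * Xᵀ)ᵀ = X * (Xᵀ * X)⁻¹ := by
  rw [transpose_mul, transpose_transpose, transpose_nonsing_inv, transpose_mul,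
    transpose_transpose]

theorem eq_mul_mul_inv_mul_transpose_of_eq_mul_transpose {m : Type*} {X : Matrix n k R}
    (hX : IsUnit (Xᵀ * X)) {B : Matrix m n R} {D : Matrix m k R} (hB : B = D * Xᵀ) :
    B = B * X * (Xᵀ * X)⁻¹ * Xᵀ := by
  rw [hB, Matrix.mul_assoc D, mul_nonsing_inv_cancel_right _ _ ((isUnit_iff_isUnit_det _).mp hX)]

section ResidualMaker

variable [DecidableEq n]

noncomputable def residualMaker (X : Matrix n k R) : Matrix n n R :=
  1 - X * (Xᵀ * X)⁻¹ * Xᵀ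

theorem transpose_mul_residualMaker {X : Matrix n k R} (hX : IsUnit (Xᵀ * X)) :
    Xᵀ * residualMaker X = 0 := by
  rw [residualMaker, Matrix.mul_sub, Matrix.mul_one, ← Matrix.mul_assoc, ← Matrix.mul_assoc,
    mul_nonsing_inv _ ((isUnit_iff_isUnit_det _).mp hX), Matrix.one_mul, sub_self]

theorem residualMaker_mul_eq_fromCols_mul {k₂ : Type*} [Fintype k₂] [DecidableEq k₂]
    (X₁ : Matrix n k R) (X₂ : Matrix n k₂ R) :
    residualMaker X₁ * X₂
      = fromCols X₁ X₂ * fromRows (-((X₁ᵀ * X₁)⁻¹ * X₁ᵀ * X₂)) (1 : Matrix k₂ k₂ R) := by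
  rw [fromCols_mul_fromRows, residualMaker, Matrix.sub_mul, Matrix.one_mul, Matrix.mul_one,
    Matrix.mul_neg]
  simp only [Matrix.mul_assoc]
  abel

theorem toRows₂_inv_mul_transpose_fromCols {k₂ : Type*} [Fintype k₂] [DecidableEq k₂]
    {X₁ : Matrix n k R} {X₂ : Matrix n k₂ R}
    (hX : IsUnit ((fromCols X₁ X₂)ᵀ * fromCols X₁ X₂)) (hX₁ : IsUnit (X₁ᵀ * X₁))
    (hZ : IsUnit ((residualMaker X₁ * X₂)ᵀ * (residualMaker X₁ * X₂))) :
    (((fromCols X₁ X₂)ᵀ * fromCols X₁ X₂)⁻¹ * (fromCols X₁ X₂)ᵀ).toRows₂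
      = ((residualMaker X₁ * X₂)ᵀ * (residualMaker X₁ * X₂))⁻¹ * (residualMaker X₁ * X₂)ᵀ := by
  set X := fromCols X₁ X₂
  set Z := residualMaker X₁ * X₂
  set P := fromRows (-((X₁ᵀ * X₁)⁻¹ * X₁ᵀ * X₂)) (1 : Matrix k₂ k₂ R)
  have hZ_eq : Z = X * P := residualMaker_mul_eq_fromCols_mul X₁ X₂
  have hZX₁ : Zᵀ * X₁ = 0 := by
    have h := congrArg transpose (show X₁ᵀ * Z = 0 by
      rw [← Matrix.mul_assoc, transpose_mul_residualMaker hX₁, Matrix.zero_mul])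
    rwa [transpose_mul, transpose_transpose, transpose_zero] at h
  have hZZ : Zᵀ * Z = Zᵀ * X₂ := by
    nth_rewrite 2 [hZ_eq]
    rw [← Matrix.mul_assoc, mul_fromCols, hZX₁, fromCols_mul_fromRows, Matrix.zero_mul,
      Matrix.mul_one, zero_add]
  have hBX : (Zᵀ * Z)⁻¹ * Zᵀ * X = fromCols 0 1 := by
    rw [Matrix.mul_assoc, mul_fromCols, hZX₁, ← hZZ, mul_fromCols, Matrix.mul_zero,
      nonsing_inv_mul _ ((isUnit_iff_isUnit_det _).mp hZ)]
  have hB : (Zᵀ * Z)⁻¹ * Zᵀ = (Zᵀ * Z)⁻¹ * Pᵀ * Xᵀ := by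
    rw [Matrix.mul_assoc, ← transpose_mul, ← hZ_eq]
  rw [eq_mul_mul_inv_mul_transpose_of_eq_mul_transpose hX hB, hBX, Matrix.mul_assoc,
    fromCols_zero_one_mul]

end ResidualMaker

end Matrix

theorem stmt_9 {n K L : ℕ}
    (X1 : Matrix (Fin n) (Fin K) ℝ) (X2 : Matrix (Fin n) (Fin L) ℝ)
    (Ω : Matrix (Fin n) (Fin n) ℝ)
    (X : Matrix (Fin n) (Fin K ⊕ Fin L) ℝ) (hX : X = Matrix.fromCols X1 X2)
    (H1 : Matrix (Fin n) (Fin n) ℝ) (hH1 : H1 = X1 * (X1ᵀ * X1)⁻¹ * X1ᵀ)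
    (X2t : Matrix (Fin n) (Fin L) ℝ) (hX2t : X2t = (1 - H1) * X2)
    (hGX : IsUnit (Xᵀ * X)) (hG1 : IsUnit (X1ᵀ * X1)) (hG2 : IsUnit (X2tᵀ * X2t)) :
    ((Xᵀ * X)⁻¹ * Xᵀ * Ω * X * (Xᵀ * X)⁻¹).toBlocks₂₂
      = (X2tᵀ * X2t)⁻¹ * X2tᵀ * Ω * X2t * (X2tᵀ * X2t)⁻¹ := by
  subst hX hH1 hX2t
  rw [Matrix.mul_assoc _ (fromCols X1 X2), ← transpose_inv_mul_transpose,
    toBlocks₂₂_mul_mul_transpose, toRows₂_inv_mul_transpose_fromCols hGX hG1 hG2,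
    transpose_inv_mul_transpose, ← Matrix.mul_assoc]
  rfl
end

section
/- The lower L-row block of A = (X'X)^{-1}X' equals (X̃2'X̃2)^{-1}X̃2', i.e., the rows of (X'X)^{-1}X' corresponding to the X2 coefficients coincide with the OLS projection rows of the residualized regressors X̃2. -/
/-!
Frisch–Waugh–Lovell. With `M = 1 - H₁` the symmetric idempotent residual maker of `X₁`,
`X̃₂ = M X₂` and `A₂ = (X̃₂ᵀ X̃₂)⁻¹ X̃₂ᵀ`, the stacked matrix `B = (A₁; A₂)` with
`A₁ = (X₁ᵀ X₁)⁻¹ X₁ᵀ (1 - X₂ A₂)` has `X B = H₁ + X̃₂ A₂`. Since `X₁ᵀ M = 0` and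
`X₂ᵀ X̃₂ = X̃₂ᵀ X̃₂`, it solves the normal equations `Xᵀ X B = Xᵀ`, so `B = (Xᵀ X)⁻¹ Xᵀ`.
-/

open Matrix

namespace Matrix

variable {R : Type*} [CommRing R] {n k l : Type*} [Fintype n] [Fintype k] [DecidableEq k]

noncomputable def olsMatrix (X : Matrix n k R) : Matrix k n R := (Xᵀ * X)⁻¹ * Xᵀ

noncomputable def hatMatrix (X : Matrix n k R) : Matrix n n R := X * (Xᵀ * X)⁻¹ * Xᵀ

theorem mul_olsMatrix (X : Matrix n k R) : X * olsMatrix X = hatMatrix X :=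
  (Matrix.mul_assoc _ _ _).symm

theorem olsMatrix_eq_of_normal_eq {X : Matrix n k R} {B : Matrix k n R}
    (hX : IsUnit (Xᵀ * X)) (hB : Xᵀ * (X * B) = Xᵀ) : olsMatrix X = B := by
  calc olsMatrix X = (Xᵀ * X)⁻¹ * (Xᵀ * X * B) := by rw [Matrix.mul_assoc, hB, olsMatrix]
    _ = B := nonsing_inv_mul_cancel_left _ _ ((isUnit_iff_isUnit_det _).mp hX)

theorem hatMatrix_transpose (X : Matrix n k R) : (hatMatrix X)ᵀ = hatMatrix X := by
  simp only [hatMatrix, transpose_mul, transpose_transpose, transpose_nonsing_inv,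
    Matrix.mul_assoc]

theorem transpose_mul_hatMatrix {X : Matrix n k R} (hX : IsUnit (Xᵀ * X)) :
    Xᵀ * hatMatrix X = Xᵀ := by
  rw [hatMatrix, ← Matrix.mul_assoc, ← Matrix.mul_assoc,
    mul_nonsing_inv _ ((isUnit_iff_isUnit_det _).mp hX), Matrix.one_mul]

theorem isIdempotentElem_hatMatrix {X : Matrix n k R} (hX : IsUnit (Xᵀ * X)) :
    IsIdempotentElem (hatMatrix X) := by
  calc hatMatrix X * hatMatrix X = X * (Xᵀ * X)⁻¹ * (Xᵀ * hatMatrix X) := by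
        rw [hatMatrix, Matrix.mul_assoc (X * _)]
    _ = hatMatrix X := by rw [transpose_mul_hatMatrix hX, hatMatrix]

theorem transpose_mul_one_sub_hatMatrix [DecidableEq n] {X : Matrix n k R}
    (hX : IsUnit (Xᵀ * X)) : Xᵀ * (1 - hatMatrix X) = 0 := by
  rw [Matrix.mul_sub, Matrix.mul_one, transpose_mul_hatMatrix hX, sub_self]

theorem transpose_mul_self_of_symm_idem [Fintype l] {M : Matrix n n R} (hMT : Mᵀ = M)
    (hM : IsIdempotentElem M) (Y : Matrix n l R) :
    (M * Y)ᵀ * (M * Y) = Yᵀ * (M * Y) := by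
  rw [transpose_mul, hMT, Matrix.mul_assoc, ← Matrix.mul_assoc M M, hM.eq]

theorem olsMatrix_fromCols [DecidableEq n] [Fintype l] [DecidableEq l]
    {X₁ : Matrix n k R} {X₂ : Matrix n l R}
    (hX : IsUnit ((fromCols X₁ X₂)ᵀ * fromCols X₁ X₂)) (hX₁ : IsUnit (X₁ᵀ * X₁))
    (hX₂ : IsUnit (((1 - hatMatrix X₁) * X₂)ᵀ * ((1 - hatMatrix X₁) * X₂))) :
    olsMatrix (fromCols X₁ X₂) =
      fromRows (olsMatrix X₁ * (1 - X₂ * olsMatrix ((1 - hatMatrix X₁) * X₂)))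
        (olsMatrix ((1 - hatMatrix X₁) * X₂)) := by
  set M := 1 - hatMatrix X₁ with hM
  set A₂ := olsMatrix (M * X₂) with hA₂
  have hMT : Mᵀ = M := by
    rw [hM, transpose_sub, transpose_one, hatMatrix_transpose]
  have hMidem : IsIdempotentElem M := (isIdempotentElem_hatMatrix hX₁).one_sub
  have hfit : fromCols X₁ X₂ * fromRows (olsMatrix X₁ * (1 - X₂ * A₂)) A₂
      = hatMatrix X₁ + M * X₂ * A₂ := by
    rw [fromCols_mul_fromRows, ← Matrix.mul_assoc, mul_olsMatrix]
    simp only [hM, Matrix.mul_sub, Matrix.sub_mul, Matrix.mul_one, Matrix.one_mul,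
      Matrix.mul_assoc]
    abel
  have hX₂A₂ : X₂ᵀ * (M * X₂ * A₂) = X₂ᵀ * M :=
    calc X₂ᵀ * (M * X₂ * A₂) = (M * X₂)ᵀ * (M * X₂) * A₂ := by
          rw [transpose_mul_self_of_symm_idem hMT hMidem]; simp only [Matrix.mul_assoc]
      _ = (M * X₂)ᵀ := by
          rw [hA₂, olsMatrix, ← Matrix.mul_assoc,
            mul_nonsing_inv _ ((isUnit_iff_isUnit_det _).mp hX₂), Matrix.one_mul]
      _ = X₂ᵀ * M := by rw [transpose_mul, hMT]
  apply olsMatrix_eq_of_normal_eq hX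
  rw [hfit, transpose_fromCols, fromRows_mul]
  congr 1
  · rw [Matrix.mul_add, transpose_mul_hatMatrix hX₁, ← Matrix.mul_assoc, ← Matrix.mul_assoc,
      transpose_mul_one_sub_hatMatrix hX₁, Matrix.zero_mul, Matrix.zero_mul, add_zero]
  · rw [Matrix.mul_add, hX₂A₂, ← Matrix.mul_add, hM, add_sub_cancel, Matrix.mul_one]

end Matrix

theorem stmt_10 {n K L : ℕ}
    (X1 : Matrix (Fin n) (Fin K) ℝ) (X2 : Matrix (Fin n) (Fin L) ℝ)
    (X : Matrix (Fin n) (Fin K ⊕ Fin L) ℝ) (hX : X = Matrix.fromCols X1 X2)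
    (H1 : Matrix (Fin n) (Fin n) ℝ) (hH1 : H1 = X1 * (X1ᵀ * X1)⁻¹ * X1ᵀ)
    (X2t : Matrix (Fin n) (Fin L) ℝ) (hX2t : X2t = (1 - H1) * X2)
    (A : Matrix (Fin K ⊕ Fin L) (Fin n) ℝ) (hA : A = (Xᵀ * X)⁻¹ * Xᵀ)
    (hGX : IsUnit (Xᵀ * X)) (hG1 : IsUnit (X1ᵀ * X1)) (hG2 : IsUnit (X2tᵀ * X2t)) :
    A.submatrix Sum.inr id = (X2tᵀ * X2t)⁻¹ * X2tᵀ := by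
  subst hX hH1 hX2t hA
  rw [← olsMatrix, olsMatrix_fromCols hGX hG1 hG2]
  exact toRows₂_fromRows _ _
end

section
/- The homoskedastic variance estimator for the treatment coefficient in the stratified-experiment regression equals V̂ = n/(n-K-1) · Σ_k ω_[k] π_[k] { Λ̂_[k] + (τ̂_[k] - τ̂_OLS)²/n_[k] }, where Λ̂_[k] = s_[k]1²/n_[k]0 + s_[k]0²/n_[k]1, ω_[k] = π_[k]e_[k](1-e_[k])/Σ_{k'}π_[k']e_[k'](1-e_[k']), and V̂ = Σ_i ε̂_i² / {(n-K-1) Σ_i Z̃_i²}. -/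
open Matrix Finset

noncomputable section

variable {n K : ℕ}

/-- Units in stratum `k`. -/
def stratSet (stratum : Fin n → Fin K) (k : Fin K) : Finset (Fin n) :=
  Finset.univ.filter (fun i => stratum i = k)

/-- Treated units in stratum `k`. -/
def treatSet (stratum : Fin n → Fin K) (Z : Fin n → Bool) (k : Fin K) : Finset (Fin n) :=
  (stratSet stratum k).filter (fun i => Z i)

/-- Control units in stratum `k`. -/
def ctrlSet (stratum : Fin n → Fin K) (Z : Fin n → Bool) (k : Fin K) : Finset (Fin n) :=
  (stratSet stratum k).filter (fun i => ¬ Z i)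

/-- Stratum size `n_[k]`. -/
def nS (stratum : Fin n → Fin K) (k : Fin K) : ℕ := (stratSet stratum k).card

/-- Number of treated units `n_[k]1`. -/
def n1 (stratum : Fin n → Fin K) (Z : Fin n → Bool) (k : Fin K) : ℕ :=
  (treatSet stratum Z k).card

/-- Number of control units `n_[k]0`. -/
def n0 (stratum : Fin n → Fin K) (Z : Fin n → Bool) (k : Fin K) : ℕ :=
  (ctrlSet stratum Z k).card

/-- Stratum proportion `π_[k] = n_[k]/n`. -/
def piS (stratum : Fin n → Fin K) (k : Fin K) : ℝ := (nS stratum k : ℝ) / n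

/-- Propensity score `e_[k] = n_[k]1/n_[k]`. -/
def eS (stratum : Fin n → Fin K) (Z : Fin n → Bool) (k : Fin K) : ℝ :=
  (n1 stratum Z k : ℝ) / (nS stratum k : ℝ)

/-- Treated mean `Ȳ_[k]1`. -/
def ybar1 (stratum : Fin n → Fin K) (Z : Fin n → Bool) (Y : Fin n → ℝ) (k : Fin K) : ℝ :=
  (∑ i ∈ treatSet stratum Z k, Y i) / (n1 stratum Z k : ℝ)

/-- Control mean `Ȳ_[k]0`. -/
def ybar0 (stratum : Fin n → Fin K) (Z : Fin n → Bool) (Y : Fin n → ℝ) (k : Fin K) : ℝ :=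
  (∑ i ∈ ctrlSet stratum Z k, Y i) / (n0 stratum Z k : ℝ)

/-- Within-stratum difference in means `τ̂_[k]`. -/
def tauK (stratum : Fin n → Fin K) (Z : Fin n → Bool) (Y : Fin n → ℝ) (k : Fin K) : ℝ :=
  ybar1 stratum Z Y k - ybar0 stratum Z Y k

/-- Weight `ω_[k] = π_[k]e_[k](1-e_[k]) / Σ_{k'} π_[k']e_[k'](1-e_[k'])`. -/
def wS (stratum : Fin n → Fin K) (Z : Fin n → Bool) (k : Fin K) : ℝ :=
  piS stratum k * eS stratum Z k * (1 - eS stratum Z k) /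
    (∑ k', piS stratum k' * eS stratum Z k' * (1 - eS stratum Z k'))

/-- Weighted average `τ̂_OLS = Σ_k ω_[k] τ̂_[k]`. -/
def tauOLS (stratum : Fin n → Fin K) (Z : Fin n → Bool) (Y : Fin n → ℝ) : ℝ :=
  ∑ k, wS stratum Z k * tauK stratum Z Y k

/-- Design matrix of the no-intercept regression of `Y` on `Z` and the stratum dummies. -/
def design (stratum : Fin n → Fin K) (Z : Fin n → Bool) :
    Matrix (Fin n) (Unit ⊕ Fin K) ℝ := fun i j =>
  match j with
  | Sum.inl _ => if Z i then 1 else 0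
  | Sum.inr k => if stratum i = k then 1 else 0

/-- OLS coefficient vector from the regression of `Y` on `Z` and the stratum dummies. -/
def olsCoef (stratum : Fin n → Fin K) (Z : Fin n → Bool) (Y : Fin n → ℝ) :
    (Unit ⊕ Fin K) → ℝ :=
  ((design stratum Z)ᵀ * design stratum Z)⁻¹ *ᵥ ((design stratum Z)ᵀ *ᵥ Y)

/-- OLS residual vector from the regression of `Y` on `Z` and the stratum dummies. -/
def olsResid (stratum : Fin n → Fin K) (Z : Fin n → Bool) (Y : Fin n → ℝ) (i : Fin n) : ℝ :=
  Y i - (design stratum Z *ᵥ olsCoef stratum Z Y) i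

/-- Treated-group sample variance `s_[k]1²` (denominator `n_[k]1`). -/
def s1sq (stratum : Fin n → Fin K) (Z : Fin n → Bool) (Y : Fin n → ℝ) (k : Fin K) : ℝ :=
  (∑ i ∈ treatSet stratum Z k, (Y i - ybar1 stratum Z Y k) ^ 2) / (n1 stratum Z k : ℝ)

/-- Control-group sample variance `s_[k]0²` (denominator `n_[k]0`). -/
def s0sq (stratum : Fin n → Fin K) (Z : Fin n → Bool) (Y : Fin n → ℝ) (k : Fin K) : ℝ :=
  (∑ i ∈ ctrlSet stratum Z k, (Y i - ybar0 stratum Z Y k) ^ 2) / (n0 stratum Z k : ℝ)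

/-- Residual of `Z` from its regression on the stratum dummies: `Z̃_i = Z_i - e_[stratum i]`. -/
def zTilde (stratum : Fin n → Fin K) (Z : Fin n → Bool) (i : Fin n) : ℝ :=
  (if Z i then 1 else 0) - eS stratum Z (stratum i)

end

/-!
The regression of `Y` on `Z` and the stratum dummies is solved in closed form: its coefficient
on `Z` is `τ̂_OLS` and its intercept in stratum `k` is `Ȳ_[k]0 + e_[k] (τ̂_[k] - τ̂_OLS)`, so the
residual of a unit in stratum `k` is its deviation from its treatment-arm mean plus
`Z̃_i (τ̂_[k] - τ̂_OLS)`. These residuals satisfy the normal equations because `τ̂_OLS` is the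
`π e (1 - e)`-weighted average of the `τ̂_[k]`. As `Z̃` is constant on each arm of each stratum,
the cross terms vanish and the residual sum of squares of stratum `k` is
`n_[k]1 s_[k]1² + n_[k]0 s_[k]0² + n_[k] e_[k] (1 - e_[k]) (τ̂_[k] - τ̂_OLS)²
  = n_[k]² e_[k] (1 - e_[k]) (Λ̂_[k] + (τ̂_[k] - τ̂_OLS)² / n_[k])`,
while `Σ_i Z̃_i² = n Σ_k π_[k] e_[k] (1 - e_[k])`.
-/

theorem Matrix.inv_transpose_mul_self_mulVec_eq {m p R : Type*} [Fintype m] [Fintype p]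
    [DecidableEq p] [Field R] [LinearOrder R] [IsStrictOrderedRing R] (X : Matrix m p R)
    (hX : Function.Injective X.mulVec) {Y : m → R} {β : p → R} (hβ : Xᵀ *ᵥ (Y - X *ᵥ β) = 0) : (Xᵀ * X)⁻¹ *ᵥ (Xᵀ *ᵥ Y) = β := by
  have hG : IsUnit (Xᵀ * X) := by
    rwa [← mulVec_injective_iff_isUnit, ← coe_mulVecLin, ← LinearMap.ker_eq_bot,
      ker_mulVecLin_transpose_mul_self, LinearMap.ker_eq_bot, coe_mulVecLin]
  have hnormal : Xᵀ *ᵥ Y = (Xᵀ * X) *ᵥ β := by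
    rwa [mulVec_sub, sub_eq_zero, mulVec_mulVec] at hβ
  rw [hnormal, mulVec_mulVec, nonsing_inv_mul _ ((isUnit_iff_isUnit_det _).1 hG), one_mulVec]

theorem Finset.sum_add_const_sq_of_sum_eq_zero {ι R : Type*} [CommRing R] {s : Finset ι}
    {u : ι → R} (hu : ∑ i ∈ s, u i = 0) (c : R) :
    ∑ i ∈ s, (u i + c) ^ 2 = ∑ i ∈ s, u i ^ 2 + #s * c ^ 2 := by
  simp only [add_sq, sum_add_distrib, ← sum_mul, ← mul_sum, hu, sum_const, nsmul_eq_mul]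
  ring

theorem Finset.sum_mul_sub_weighted_average {ι R : Type*} [Field R] (s : Finset ι)
    (a x : ι → R) (ha : ∑ i ∈ s, a i ≠ 0) :
    ∑ i ∈ s, a i * (x i - ∑ j ∈ s, a j / (∑ l ∈ s, a l) * x j) = 0 := by
  simp only [mul_sub, sum_sub_distrib, ← sum_mul, div_mul_eq_mul_div, ← sum_div]
  field_simp
  ring

section StratifiedExperiment

variable {n K : ℕ} (stratum : Fin n → Fin K) (Z : Fin n → Bool) (Y : Fin n → ℝ)

lemma sum_eq_sum_stratSet (f : Fin n → ℝ) : ∑ i, f i = ∑ k, ∑ i ∈ stratSet stratum k, f i :=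
  (sum_fiberwise univ stratum f).symm

lemma sum_stratSet_eq_add (k : Fin K) (f : Fin n → ℝ) :
    ∑ i ∈ stratSet stratum k, f i
      = ∑ i ∈ treatSet stratum Z k, f i + ∑ i ∈ ctrlSet stratum Z k, f i :=
  (sum_filter_add_sum_filter_not _ _ _).symm

lemma mem_treatSet {k : Fin K} {i : Fin n} :
    i ∈ treatSet stratum Z k ↔ stratum i = k ∧ Z i = true := by
  simp [treatSet, stratSet]

lemma mem_ctrlSet {k : Fin K} {i : Fin n} :
    i ∈ ctrlSet stratum Z k ↔ stratum i = k ∧ Z i = false := by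
  simp [ctrlSet, stratSet]

lemma nS_eq_n1_add_n0 (k : Fin K) : nS stratum k = n1 stratum Z k + n0 stratum Z k :=
  (card_filter_add_card_filter_not _).symm

lemma nS_pos {k : Fin K} (hk : 0 < n1 stratum Z k) : 0 < nS stratum k := by
  rw [nS_eq_n1_add_n0 stratum Z]; exact Nat.add_pos_left hk _

lemma nS_le (k : Fin K) : nS stratum k ≤ n := (card_le_univ _).trans (Fintype.card_fin n).le

lemma pos_of_n1_pos {k : Fin K} (hk : 0 < n1 stratum Z k) : 0 < n :=
  (nS_pos stratum Z hk).trans_le (nS_le stratum k)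

lemma n1_eq_nS_mul_eS {k : Fin K} (hk : nS stratum k ≠ 0) :
    (n1 stratum Z k : ℝ) = nS stratum k * eS stratum Z k := by
  rw [eS]; field_simp

lemma n0_eq_nS_mul_one_sub_eS {k : Fin K} (hk : nS stratum k ≠ 0) :
    (n0 stratum Z k : ℝ) = nS stratum k * (1 - eS stratum Z k) := by
  rw [mul_one_sub, ← n1_eq_nS_mul_eS stratum Z hk, nS_eq_n1_add_n0 stratum Z]
  push_cast; ring

lemma nS_eq_mul_piS (hn : n ≠ 0) (k : Fin K) : (nS stratum k : ℝ) = n * piS stratum k := by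
  rw [piS]; field_simp

lemma sum_treatSet_sub_ybar1 {k : Fin K} (hk : 0 < n1 stratum Z k) :
    ∑ i ∈ treatSet stratum Z k, (Y i - ybar1 stratum Z Y k) = 0 := by
  have : (n1 stratum Z k : ℝ) ≠ 0 := by positivity
  rw [sum_sub_distrib, sum_const, nsmul_eq_mul, ybar1, ← n1]
  field_simp
  ring

lemma sum_ctrlSet_sub_ybar0 {k : Fin K} (hk : 0 < n0 stratum Z k) :
    ∑ i ∈ ctrlSet stratum Z k, (Y i - ybar0 stratum Z Y k) = 0 := by
  have : (n0 stratum Z k : ℝ) ≠ 0 := by positivity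
  rw [sum_sub_distrib, sum_const, nsmul_eq_mul, ybar0, ← n0]
  field_simp
  ring

noncomputable def wDenom : ℝ := ∑ k, piS stratum k * eS stratum Z k * (1 - eS stratum Z k)

lemma wDenom_pos (h1 : ∀ k, 0 < n1 stratum Z k) (h0 : ∀ k, 0 < n0 stratum Z k)
    (hK : 0 < K) :
    0 < wDenom stratum Z := by
  refine sum_pos (fun k _ => ?_) (univ_nonempty_iff.2 (Fin.pos_iff_nonempty.1 hK))
  have hnS := nS_pos stratum Z (h1 k)
  have hnS' : (0 : ℝ) < nS stratum k := by exact_mod_cast hnS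
  have hpi : 0 < piS stratum k :=
    div_pos hnS' (by exact_mod_cast pos_of_n1_pos stratum Z (h1 k))
  have he : 0 < eS stratum Z k := pos_of_mul_pos_right
    (n1_eq_nS_mul_eS stratum Z hnS.ne' ▸ (by exact_mod_cast h1 k)) hnS'.le
  have he' : 0 < 1 - eS stratum Z k := pos_of_mul_pos_right
    (n0_eq_nS_mul_one_sub_eS stratum Z hnS.ne' ▸ (by exact_mod_cast h0 k)) hnS'.le
  positivity

noncomputable def strataCoef : Unit ⊕ Fin K → ℝ
  | Sum.inl _ => tauOLS stratum Z Y
  | Sum.inr k =>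
    ybar0 stratum Z Y k + eS stratum Z k * (tauK stratum Z Y k - tauOLS stratum Z Y)


lemma design_mulVec (v : Unit ⊕ Fin K → ℝ) (i : Fin n) :
    (design stratum Z *ᵥ v) i
      = (if Z i then 1 else 0) * v (Sum.inl ()) + v (Sum.inr (stratum i)) := by
  simp [mulVec, dotProduct, Fintype.sum_sum_type, design]

lemma design_mulVec_injective (h1 : ∀ k, 0 < n1 stratum Z k) (h0 : ∀ k, 0 < n0 stratum Z k)
    (hK : 0 < K) : Function.Injective (design stratum Z).mulVec := by
  refine (injective_iff_map_eq_zero (design stratum Z).mulVecLin).2 fun v hv => ?_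
  have hXv : ∀ i, (if Z i then 1 else 0) * v (Sum.inl ()) + v (Sum.inr (stratum i)) = 0 :=
    fun i => by rw [← design_mulVec]; exact congrFun hv i
  have hinr : ∀ k, v (Sum.inr k) = 0 := fun k => by
    obtain ⟨i, hi⟩ := card_pos.1 (h0 k)
    obtain ⟨rfl, hZ⟩ := (mem_ctrlSet stratum Z).1 hi
    simpa [hZ] using hXv i
  obtain ⟨i, hi⟩ := card_pos.1 (h1 ⟨0, hK⟩)
  have hinl : v (Sum.inl ()) = 0 := by
    simpa [((mem_treatSet stratum Z).1 hi).2, hinr] using hXv i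
  ext (_ | k)
  exacts [hinl, hinr k]

lemma resid_of_mem_treatSet {k : Fin K} {i : Fin n} (hi : i ∈ treatSet stratum Z k) :
    Y i - (design stratum Z *ᵥ strataCoef stratum Z Y) i
      = (Y i - ybar1 stratum Z Y k)
        + (1 - eS stratum Z k) * (tauK stratum Z Y k - tauOLS stratum Z Y) := by
  obtain ⟨rfl, hZ⟩ := (mem_treatSet stratum Z).1 hi
  simp only [design_mulVec, hZ, if_true, strataCoef, tauK]
  ring

lemma resid_of_mem_ctrlSet {k : Fin K} {i : Fin n} (hi : i ∈ ctrlSet stratum Z k) :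
    Y i - (design stratum Z *ᵥ strataCoef stratum Z Y) i
      = (Y i - ybar0 stratum Z Y k)
        + -eS stratum Z k * (tauK stratum Z Y k - tauOLS stratum Z Y) := by
  obtain ⟨rfl, hZ⟩ := (mem_ctrlSet stratum Z).1 hi
  simp only [design_mulVec, hZ, Bool.false_eq_true, if_false, strataCoef]
  ring

lemma sum_treatSet_resid {k : Fin K} (hk : 0 < n1 stratum Z k) :
    ∑ i ∈ treatSet stratum Z k, (Y i - (design stratum Z *ᵥ strataCoef stratum Z Y) i)
      = n1 stratum Z k
        * ((1 - eS stratum Z k) * (tauK stratum Z Y k - tauOLS stratum Z Y)) := by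
  rw [sum_congr rfl fun i hi => resid_of_mem_treatSet stratum Z Y hi, sum_add_distrib,
    sum_treatSet_sub_ybar1 stratum Z Y hk, sum_const, nsmul_eq_mul, zero_add, n1]

lemma sum_ctrlSet_resid {k : Fin K} (hk : 0 < n0 stratum Z k) :
    ∑ i ∈ ctrlSet stratum Z k, (Y i - (design stratum Z *ᵥ strataCoef stratum Z Y) i)
      = n0 stratum Z k * (-eS stratum Z k * (tauK stratum Z Y k - tauOLS stratum Z Y)) := by
  rw [sum_congr rfl fun i hi => resid_of_mem_ctrlSet stratum Z Y hi, sum_add_distrib,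
    sum_ctrlSet_sub_ybar0 stratum Z Y hk, sum_const, nsmul_eq_mul, zero_add, n0]

lemma design_transpose_mulVec_inl (r : Fin n → ℝ) :
    ((design stratum Z)ᵀ *ᵥ r) (Sum.inl ()) = ∑ k, ∑ i ∈ treatSet stratum Z k, r i := by
  simp only [mulVec, dotProduct, transpose_apply, design, ite_mul, one_mul, zero_mul]
  rw [← sum_filter, ← sum_fiberwise _ stratum r]
  refine sum_congr rfl fun k _ => sum_congr ?_ fun _ _ => rfl
  ext i
  simp [treatSet, stratSet, and_comm]

lemma design_transpose_mulVec_inr (r : Fin n → ℝ) (k : Fin K) :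
    ((design stratum Z)ᵀ *ᵥ r) (Sum.inr k) = ∑ i ∈ stratSet stratum k, r i := by
  simp only [mulVec, dotProduct, transpose_apply, design, ite_mul, one_mul, zero_mul]
  rw [← sum_filter]
  rfl

lemma design_transpose_mulVec_resid (h1 : ∀ k, 0 < n1 stratum Z k)
    (h0 : ∀ k, 0 < n0 stratum Z k) (hK : 0 < K) :
    (design stratum Z)ᵀ *ᵥ (Y - design stratum Z *ᵥ strataCoef stratum Z Y) = 0 := by
  have hnS : ∀ k, nS stratum k ≠ 0 := fun k => (nS_pos stratum Z (h1 k)).ne'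
  have hn : n ≠ 0 := (pos_of_n1_pos stratum Z (h1 ⟨0, hK⟩)).ne'
  ext (_ | k)
  · calc ((design stratum Z)ᵀ *ᵥ (Y - design stratum Z *ᵥ strataCoef stratum Z Y)) (Sum.inl ())
        = ∑ k, n1 stratum Z k
            * ((1 - eS stratum Z k) * (tauK stratum Z Y k - tauOLS stratum Z Y)) := by
          rw [design_transpose_mulVec_inl]
          exact sum_congr rfl fun k _ => sum_treatSet_resid stratum Z Y (h1 k)
      _ = n * ∑ k, piS stratum k * eS stratum Z k * (1 - eS stratum Z k)
            * (tauK stratum Z Y k - tauOLS stratum Z Y) := by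
          rw [mul_sum]
          refine sum_congr rfl fun k _ => ?_
          rw [n1_eq_nS_mul_eS stratum Z (hnS k), nS_eq_mul_piS stratum hn]
          ring
      _ = 0 := mul_eq_zero_of_right _
            (sum_mul_sub_weighted_average _ _ _ (wDenom_pos stratum Z h1 h0 hK).ne')
  · rw [design_transpose_mulVec_inr, sum_stratSet_eq_add stratum Z]
    simp only [Pi.sub_apply, Pi.zero_apply]
    rw [sum_treatSet_resid stratum Z Y (h1 k), sum_ctrlSet_resid stratum Z Y (h0 k),
      n1_eq_nS_mul_eS stratum Z (hnS k), n0_eq_nS_mul_one_sub_eS stratum Z (hnS k)]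
    ring

lemma olsCoef_eq_strataCoef (h1 : ∀ k, 0 < n1 stratum Z k) (h0 : ∀ k, 0 < n0 stratum Z k)
    (hK : 0 < K) : olsCoef stratum Z Y = strataCoef stratum Z Y :=
  inv_transpose_mul_self_mulVec_eq _ (design_mulVec_injective stratum Z h1 h0 hK)
    (design_transpose_mulVec_resid stratum Z Y h1 h0 hK)

lemma sum_sq_treatSet_resid {k : Fin K} (hk : 0 < n1 stratum Z k) :
    ∑ i ∈ treatSet stratum Z k, (Y i - (design stratum Z *ᵥ strataCoef stratum Z Y) i) ^ 2
      = n1 stratum Z k * s1sq stratum Z Y k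
        + n1 stratum Z k
          * ((1 - eS stratum Z k) * (tauK stratum Z Y k - tauOLS stratum Z Y)) ^ 2 := by
  have : (n1 stratum Z k : ℝ) ≠ 0 := by positivity
  rw [sum_congr rfl fun i hi => by rw [resid_of_mem_treatSet stratum Z Y hi],
    sum_add_const_sq_of_sum_eq_zero (sum_treatSet_sub_ybar1 stratum Z Y hk), s1sq, ← n1]
  field_simp

lemma sum_sq_ctrlSet_resid {k : Fin K} (hk : 0 < n0 stratum Z k) :
    ∑ i ∈ ctrlSet stratum Z k, (Y i - (design stratum Z *ᵥ strataCoef stratum Z Y) i) ^ 2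
      = n0 stratum Z k * s0sq stratum Z Y k
        + n0 stratum Z k
          * (-eS stratum Z k * (tauK stratum Z Y k - tauOLS stratum Z Y)) ^ 2 := by
  have : (n0 stratum Z k : ℝ) ≠ 0 := by positivity
  rw [sum_congr rfl fun i hi => by rw [resid_of_mem_ctrlSet stratum Z Y hi],
    sum_add_const_sq_of_sum_eq_zero (sum_ctrlSet_sub_ybar0 stratum Z Y hk), s0sq, ← n0]
  field_simp

lemma sum_sq_stratSet_resid {k : Fin K} (h1k : 0 < n1 stratum Z k)
    (h0k : 0 < n0 stratum Z k) :
    ∑ i ∈ stratSet stratum k, (Y i - (design stratum Z *ᵥ strataCoef stratum Z Y) i) ^ 2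
      = nS stratum k ^ 2 * eS stratum Z k * (1 - eS stratum Z k)
        * ((s1sq stratum Z Y k / n0 stratum Z k + s0sq stratum Z Y k / n1 stratum Z k)
          + (tauK stratum Z Y k - tauOLS stratum Z Y) ^ 2 / nS stratum k) := by
  have h1k' : (0 : ℝ) < n1 stratum Z k := by exact_mod_cast h1k
  have h0k' : (0 : ℝ) < n0 stratum Z k := by exact_mod_cast h0k
  rw [sum_stratSet_eq_add stratum Z, sum_sq_treatSet_resid stratum Z Y h1k,
    sum_sq_ctrlSet_resid stratum Z Y h0k, eS, nS_eq_n1_add_n0 stratum Z]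
  push_cast
  field_simp
  ring

lemma n_sq_mul_wDenom_mul_wS_mul_piS (hn : n ≠ 0) (hW : wDenom stratum Z ≠ 0) (k : Fin K) :
    n ^ 2 * wDenom stratum Z * (wS stratum Z k * piS stratum k)
      = nS stratum k ^ 2 * eS stratum Z k * (1 - eS stratum Z k) := by
  rw [wS, ← wDenom, nS_eq_mul_piS stratum hn]
  field_simp

lemma sum_sq_olsResid (h1 : ∀ k, 0 < n1 stratum Z k) (h0 : ∀ k, 0 < n0 stratum Z k)
    (hK : 0 < K) :
    ∑ i, olsResid stratum Z Y i ^ 2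
      = n ^ 2 * wDenom stratum Z * ∑ k, wS stratum Z k * piS stratum k
          * ((s1sq stratum Z Y k / n0 stratum Z k + s0sq stratum Z Y k / n1 stratum Z k)
            + (tauK stratum Z Y k - tauOLS stratum Z Y) ^ 2 / nS stratum k) := by
  simp only [olsResid, olsCoef_eq_strataCoef stratum Z Y h1 h0 hK]
  rw [sum_eq_sum_stratSet stratum, mul_sum]
  refine sum_congr rfl fun k _ => ?_
  have hn : n ≠ 0 := (pos_of_n1_pos stratum Z (h1 k)).ne'
  rw [← mul_assoc, n_sq_mul_wDenom_mul_wS_mul_piS stratum Z hn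
    (wDenom_pos stratum Z h1 h0 hK).ne', sum_sq_stratSet_resid stratum Z Y (h1 k) (h0 k)]

lemma zTilde_of_mem_treatSet {k : Fin K} {i : Fin n} (hi : i ∈ treatSet stratum Z k) :
    zTilde stratum Z i = 1 - eS stratum Z k := by
  obtain ⟨rfl, hZ⟩ := (mem_treatSet stratum Z).1 hi
  simp [zTilde, hZ]

lemma zTilde_of_mem_ctrlSet {k : Fin K} {i : Fin n} (hi : i ∈ ctrlSet stratum Z k) :
    zTilde stratum Z i = -eS stratum Z k := by
  obtain ⟨rfl, hZ⟩ := (mem_ctrlSet stratum Z).1 hi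
  simp [zTilde, hZ]

lemma sum_sq_zTilde (h1 : ∀ k, 0 < n1 stratum Z k) :
    ∑ i, zTilde stratum Z i ^ 2 = n * wDenom stratum Z := by
  rw [sum_eq_sum_stratSet stratum, wDenom, mul_sum]
  refine sum_congr rfl fun k _ => ?_
  have hnS := (nS_pos stratum Z (h1 k)).ne'
  have hn : n ≠ 0 := (pos_of_n1_pos stratum Z (h1 k)).ne'
  have htreat : ∑ i ∈ treatSet stratum Z k, zTilde stratum Z i ^ 2
      = n1 stratum Z k * (1 - eS stratum Z k) ^ 2 := by
    rw [sum_congr rfl fun i hi => by rw [zTilde_of_mem_treatSet stratum Z hi], sum_const,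
      nsmul_eq_mul, n1]
  have hctrl : ∑ i ∈ ctrlSet stratum Z k, zTilde stratum Z i ^ 2
      = n0 stratum Z k * (-eS stratum Z k) ^ 2 := by
    rw [sum_congr rfl fun i hi => by rw [zTilde_of_mem_ctrlSet stratum Z hi], sum_const,
      nsmul_eq_mul, n0]
  rw [sum_stratSet_eq_add stratum Z, htreat, hctrl, n1_eq_nS_mul_eS stratum Z hnS,
    n0_eq_nS_mul_one_sub_eS stratum Z hnS, nS_eq_mul_piS stratum hn]
  ring

end StratifiedExperiment

theorem stmt_16 {n K : ℕ} (stratum : Fin n → Fin K) (Z : Fin n → Bool) (Y : Fin n → ℝ)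
    (h1 : ∀ k, 0 < n1 stratum Z k) (h0 : ∀ k, 0 < n0 stratum Z k) (hn : K + 1 < n)
    (VHat : ℝ)
    (hVHat : VHat = (∑ i, olsResid stratum Z Y i ^ 2)
      / (((n : ℝ) - K - 1) * ∑ i, zTilde stratum Z i ^ 2)) :
    VHat = (n : ℝ) / ((n : ℝ) - K - 1)
      * ∑ k, wS stratum Z k * piS stratum k
          * ((s1sq stratum Z Y k / (n0 stratum Z k : ℝ)
              + s0sq stratum Z Y k / (n1 stratum Z k : ℝ))
            + (tauK stratum Z Y k - tauOLS stratum Z Y) ^ 2 / (nS stratum k : ℝ)) := by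
  have hK : 0 < K := (stratum ⟨0, by omega⟩).pos
  have hW := (wDenom_pos stratum Z h1 h0 hK).ne'
  have hn0 : (n : ℝ) ≠ 0 := Nat.cast_ne_zero.2 (by omega)
  have hdf : (n : ℝ) - K - 1 ≠ 0 := by
    have : (K : ℝ) + 1 < n := by exact_mod_cast hn
    linarith
  rw [hVHat, sum_sq_olsResid stratum Z Y h1 h0 hK, sum_sq_zTilde stratum Z h1]
  field_simp
end
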